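/- arXiv:0708.3151 — 4 statements merged into one kernel-verified Lean document; each statement's English description precedes it below -/
import Mathlib

section
/- Assume V is finite dimensional, ∘ has a unit e (e ∘ x = x for all x), N ⊆ V is a subspace with N ∘ N ⊆ N and with ⟨·,·⟩ restricted to N nondegenerate (so V = N ⊕ N^⊥ and e = e_N + e_N^⊥ with e_N ∈ N, e_N^⊥ ∈ N^⊥). Then e_N ∘ u = u for every u ∈ N, i.e. the projection of the unit is a unit for the restricted product on N. (Step S1 in the proof of Theorem A.) -/
/-- Step S1 in the proof of Theorem A: if `V` is finite dimensional, the product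
has a unit `e`, the subspace `N` is closed under the product and the bilinear
form restricted to `N` is nondegenerate, then in the decomposition
`e = eN + eNperp` (with `eN ∈ N` and `eNperp ∈ N^⊥`) the component `eN`
is a unit for the restricted product: `eN ∘ u = u` for every `u ∈ N`. -/
theorem stepS1 {V : Type*} [AddCommGroup V] [Module ℂ V] [FiniteDimensional ℂ V]
    (B : V →ₗ[ℂ] V →ₗ[ℂ] ℂ) (hBsymm : ∀ x y, B x y = B y x)
    (mul : V →ₗ[ℂ] V →ₗ[ℂ] V)
    (hcomm : ∀ x y, mul x y = mul y x)
    (hinv : ∀ x y z, B (mul x y) z = B x (mul y z))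
    (e : V) (he : ∀ x, mul e x = x)
    (N : Submodule ℂ V)
    (hclosed : ∀ u ∈ N, ∀ v ∈ N, mul u v ∈ N)
    (hnondeg : ∀ x ∈ N, (∀ y ∈ N, B x y = 0) → x = 0)
    (eN eNperp : V) (heN : eN ∈ N)
    (heNperp : ∀ x ∈ N, B x eNperp = 0)
    (hdecomp : e = eN + eNperp) :
    ∀ u ∈ N, mul eN u = u := by
  intro u hu
  have key : mul eN u - u ∈ N := N.sub_mem (hclosed eN heN u hu) hu
  have hz : mul eN u - u = 0 := by
    apply hnondeg _ key
    intro v hv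
    have h1 : B (mul eN u - u) v = B (mul (eN - e) u) v := by
      simp [map_sub, LinearMap.sub_apply, he u]
    rw [h1, hinv]
    have : eN - e = -eNperp := by rw [hdecomp]; abel
    rw [this, map_neg, LinearMap.neg_apply, hBsymm,
      heNperp _ (hclosed u hu v hv)]
    simp
  exact sub_eq_zero.mp hz
end

section
/- Assume V is finite dimensional, ∘ has a unit e, N ⊆ V is a subspace with N ∘ N ⊆ N and with ⟨·,·⟩ restricted to N nondegenerate; write e = e_N + e_N^⊥ with e_N ∈ N, e_N^⊥ ∈ N^⊥. Then e_N^⊥ ∘ u = 0 for every u ∈ N, and e_N^⊥ is idempotent: e_N^⊥ ∘ e_N^⊥ = e_N^⊥. (Used in the proof of Theorem A and of Corollary 2.5.) -/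
/-- Used in the proof of Theorem A and of Corollary 2.5: in the setting of
step S1, the normal component `eNperp` of the unit kills `N` under the product
(`eNperp ∘ u = 0` for `u ∈ N`) and is idempotent: `eNperp ∘ eNperp = eNperp`. -/
theorem unit_normal_component {V : Type*} [AddCommGroup V] [Module ℂ V]
    [FiniteDimensional ℂ V]
    (B : V →ₗ[ℂ] V →ₗ[ℂ] ℂ) (hBsymm : ∀ x y, B x y = B y x)
    (mul : V →ₗ[ℂ] V →ₗ[ℂ] V)
    (hcomm : ∀ x y, mul x y = mul y x)
    (hinv : ∀ x y z, B (mul x y) z = B x (mul y z))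
    (e : V) (he : ∀ x, mul e x = x)
    (N : Submodule ℂ V)
    (hclosed : ∀ u ∈ N, ∀ v ∈ N, mul u v ∈ N)
    (hnondeg : ∀ x ∈ N, (∀ y ∈ N, B x y = 0) → x = 0)
    (eN eNperp : V) (heN : eN ∈ N)
    (heNperp : ∀ x ∈ N, B x eNperp = 0)
    (hdecomp : e = eN + eNperp) :
    (∀ u ∈ N, mul eNperp u = 0) ∧ mul eNperp eNperp = eNperp := by
  have key : ∀ u ∈ N, mul eNperp u = 0 := by
    intro u hu
    have hmem : mul eNperp u ∈ N := by
      have : mul eNperp u = u - mul eN u := by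
        have := he u
        rw [hdecomp] at this
        simp only [map_add, LinearMap.add_apply] at this
        exact eq_sub_of_add_eq' this
      rw [this]
      exact N.sub_mem hu (hclosed eN heN u hu)
    refine hnondeg _ hmem ?_
    intro y hy
    calc B (mul eNperp u) y = B eNperp (mul u y) := hinv _ _ _
      _ = B (mul u y) eNperp := hBsymm _ _
      _ = 0 := heNperp _ (hclosed u hu y hy)
  refine ⟨key, ?_⟩
  have h1 : mul eNperp eN = 0 := key eN heN
  have h2 := he eNperp
  rw [hdecomp] at h2
  simp only [map_add, LinearMap.add_apply] at h2
  rw [hcomm eN eNperp, h1, zero_add] at h2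
  exact h2
end

section
/- Theorem 0.5 (Strachan's sufficient condition). Given a Frobenius structure in flat coordinates on U ⊆ ℂ^m and a submanifold datum ι : W → U such that the induced metric on N = ι(W) is flat, if e ∈ T_pN and E(p) ∈ T_pN for every p ∈ N, and T_pN ∘_p T_pN ⊆ T_pN for every p ∈ N, then N is a natural Frobenius submanifold. -/
open scoped BigOperators

noncomputable section

/-- A Frobenius structure in flat coordinates on a connected open set `U ⊆ ℂ^m`:
a nondegenerate symmetric bilinear form, a holomorphic family of commutative
associative invariant products with constant unit `e`, potentiality, and a
holomorphic Euler field `E` with constant `Dconst`. The ambient Levi-Civita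
connection is the directional derivative. -/
structure FrobeniusStructure (m : ℕ) where
  U : Set (Fin m → ℂ)
  U_open : IsOpen U
  U_conn : IsConnected U
  g : (Fin m → ℂ) →ₗ[ℂ] (Fin m → ℂ) →ₗ[ℂ] ℂ
  g_symm : ∀ x y, g x y = g y x
  g_nondeg : ∀ x, (∀ y, g x y = 0) → x = 0
  mul : (Fin m → ℂ) → (Fin m → ℂ) →ₗ[ℂ] (Fin m → ℂ) →ₗ[ℂ] (Fin m → ℂ)
  mul_holo : ∀ x y, DifferentiableOn ℂ (fun p => mul p x y) U
  mul_comm : ∀ p x y, mul p x y = mul p y x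
  mul_assoc : ∀ p x y z, mul p (mul p x y) z = mul p x (mul p y z)
  g_invariant : ∀ p x y z, g (mul p x y) z = g x (mul p y z)
  e : Fin m → ℂ
  e_unit : ∀ p x, mul p e x = x
  potential : ∀ p ∈ U, ∀ w x y z : Fin m → ℂ,
    fderiv ℂ (fun q => g (mul q x y) z) p w = fderiv ℂ (fun q => g (mul q w y) z) p x
  E : (Fin m → ℂ) → (Fin m → ℂ)
  E_holo : DifferentiableOn ℂ E U
  Dconst : ℂ
  euler_metric : ∀ p ∈ U, ∀ x y : Fin m → ℂ,
    g (fderiv ℂ E p x) y + g x (fderiv ℂ E p y) = Dconst * g x y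
  euler_prod : ∀ p ∈ U, ∀ x y : Fin m → ℂ,
    fderiv ℂ (fun q => mul q x y) p (E p) - fderiv ℂ E p (mul p x y)
      + mul p (fderiv ℂ E p x) y + mul p x (fderiv ℂ E p y) = mul p x y

/-- A submanifold datum: a holomorphic embedding `emb : W → U` of a connected
open set `W ⊆ ℂ^n`, with everywhere injective differential, such that the
metric restricted to the tangent spaces `T_pN = range (D emb)_w` is
nondegenerate; `pr w` is the `g`-orthogonal projection onto the tangent space. -/
structure SubmanifoldDatum (m n : ℕ) (F : FrobeniusStructure m) where
  W : Set (Fin n → ℂ)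
  W_open : IsOpen W
  W_conn : IsConnected W
  emb : (Fin n → ℂ) → (Fin m → ℂ)
  emb_holo : DifferentiableOn ℂ emb W
  emb_maps : ∀ w ∈ W, emb w ∈ F.U
  emb_inj : Set.InjOn emb W
  demb_inj : ∀ w ∈ W, Function.Injective (fderiv ℂ emb w)
  pr : (Fin n → ℂ) → (Fin m → ℂ) →ₗ[ℂ] (Fin m → ℂ)
  pr_mem : ∀ w ∈ W, ∀ x, pr w x ∈ Set.range (fderiv ℂ emb w)
  pr_fix : ∀ w ∈ W, ∀ x ∈ Set.range (fderiv ℂ emb w), pr w x = x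
  pr_orth : ∀ w ∈ W, ∀ x : Fin m → ℂ, ∀ y ∈ Set.range (fderiv ℂ emb w),
    F.g (x - pr w x) y = 0
  g_nondeg_tangent : ∀ w ∈ W, ∀ x ∈ Set.range (fderiv ℂ emb w),
    (∀ y ∈ Set.range (fderiv ℂ emb w), F.g x y = 0) → x = 0

namespace SubmanifoldDatum

variable {m n : ℕ} {F : FrobeniusStructure m}

/-- The tangent space `T_pN` at `p = emb w`. -/
def T (S : SubmanifoldDatum m n F) (w : Fin n → ℂ) : Set (Fin m → ℂ) :=
  Set.range (fderiv ℂ S.emb w)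

open Classical in
/-- The coordinate vector mapped by `(D emb)_w` to a tangent vector `v`
(junk value `0` if `v` is not tangent). -/
def lift (S : SubmanifoldDatum m n F) (w : Fin n → ℂ) (v : Fin m → ℂ) : Fin n → ℂ :=
  if h : v ∈ Set.range (fderiv ℂ S.emb w) then h.choose else 0

/-- A tangent field: a holomorphic map `W → ℂ^m` with values in the tangent spaces. -/
def IsTangentField (S : SubmanifoldDatum m n F) (X : (Fin n → ℂ) → (Fin m → ℂ)) : Prop :=
  DifferentiableOn ℂ X S.W ∧ ∀ w ∈ S.W, X w ∈ S.T w

/-- `D_X Y`: the derivative of `Y` in the coordinate direction mapped by `D emb` to `X`. -/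
def covD (S : SubmanifoldDatum m n F) (X Y : (Fin n → ℂ) → (Fin m → ℂ)) :
    (Fin n → ℂ) → (Fin m → ℂ) :=
  fun w => fderiv ℂ Y w (S.lift w (X w))

/-- The induced (Levi-Civita) connection `∇_X Y := pr (D_X Y)`. -/
def nabla (S : SubmanifoldDatum m n F) (X Y : (Fin n → ℂ) → (Fin m → ℂ)) :
    (Fin n → ℂ) → (Fin m → ℂ) :=
  fun w => S.pr w (S.covD X Y w)

/-- The second fundamental form `h(X,Y) := (D_X Y)^⊥`. -/
def sff (S : SubmanifoldDatum m n F) (X Y : (Fin n → ℂ) → (Fin m → ℂ)) :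
    (Fin n → ℂ) → (Fin m → ℂ) :=
  fun w => S.covD X Y w - S.pr w (S.covD X Y w)

/-- The shape operator `A_Ξ X := - pr (D_X Ξ)` of a normal field `Ξ`. -/
def shape (S : SubmanifoldDatum m n F) (Xi X : (Fin n → ℂ) → (Fin m → ℂ)) :
    (Fin n → ℂ) → (Fin m → ℂ) :=
  fun w => - S.pr w (S.covD X Xi w)

/-- The Lie bracket of tangent fields. -/
def bracket (S : SubmanifoldDatum m n F) (X Y : (Fin n → ℂ) → (Fin m → ℂ)) :
    (Fin n → ℂ) → (Fin m → ℂ) :=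
  fun w => S.covD X Y w - S.covD Y X w

/-- `e_N := pr e`, the tangential part of the unit field. -/
def eN (S : SubmanifoldDatum m n F) : (Fin n → ℂ) → (Fin m → ℂ) :=
  fun w => S.pr w F.e

/-- `E_N := pr (E ∘ emb)`, the tangential part of the Euler field. -/
def EN (S : SubmanifoldDatum m n F) : (Fin n → ℂ) → (Fin m → ℂ) :=
  fun w => S.pr w (F.E (S.emb w))

/-- `E_N^⊥ := E ∘ emb - E_N`, the normal part of the Euler field. -/
def ENperp (S : SubmanifoldDatum m n F) : (Fin n → ℂ) → (Fin m → ℂ) :=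
  fun w => F.E (S.emb w) - S.pr w (F.E (S.emb w))

/-- The induced product `X * Y := pr (X ∘ Y)`. -/
def star (S : SubmanifoldDatum m n F) (X Y : (Fin n → ℂ) → (Fin m → ℂ)) :
    (Fin n → ℂ) → (Fin m → ℂ) :=
  fun w => S.pr w (F.mul (S.emb w) (X w) (Y w))

/-- The induced metric is flat: the curvature of `∇` vanishes. -/
def FlatInduced (S : SubmanifoldDatum m n F) : Prop :=
  ∀ X Y Z, S.IsTangentField X → S.IsTangentField Y → S.IsTangentField Z →
    ∀ w ∈ S.W,
      S.nabla X (S.nabla Y Z) w - S.nabla Y (S.nabla X Z) w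
        - S.nabla (S.bracket X Y) Z w = 0

/-- The tangent spaces are closed under the ambient product:
`T_pN ∘_p T_pN ⊆ T_pN`. -/
def ClosedUnderMul (S : SubmanifoldDatum m n F) : Prop :=
  ∀ w ∈ S.W, ∀ x ∈ S.T w, ∀ y ∈ S.T w, F.mul (S.emb w) x y ∈ S.T w

/-- The covariant derivative 4-tensor
`(X', X, Y, Z) ↦ X'⟨X*Y, Z⟩ − ⟨(∇_{X'}X)*Y, Z⟩ − ⟨X*(∇_{X'}Y), Z⟩ − ⟨X*Y, ∇_{X'}Z⟩`. -/
def ctensor (S : SubmanifoldDatum m n F) (X' X Y Z : (Fin n → ℂ) → (Fin m → ℂ)) :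
    (Fin n → ℂ) → ℂ :=
  fun w => fderiv ℂ (fun v => F.g (S.star X Y v) (Z v)) w (S.lift w (X' w))
    - F.g (S.star (S.nabla X' X) Y w) (Z w)
    - F.g (S.star X (S.nabla X' Y) w) (Z w)
    - F.g (S.star X Y w) (S.nabla X' Z w)

/-- `N` is a Frobenius submanifold: the induced data satisfy the Frobenius
manifold axioms. -/
structure IsFrobeniusSub (S : SubmanifoldDatum m n F) : Prop where
  nabla_flat : S.FlatInduced
  star_comm : ∀ X Y, S.IsTangentField X → S.IsTangentField Y →
    ∀ w ∈ S.W, S.star X Y w = S.star Y X w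
  star_assoc : ∀ X Y Z, S.IsTangentField X → S.IsTangentField Y → S.IsTangentField Z →
    ∀ w ∈ S.W, S.star (S.star X Y) Z w = S.star X (S.star Y Z) w
  star_unit : ∀ X, S.IsTangentField X → ∀ w ∈ S.W, S.star X S.eN w = X w
  eN_flat : ∀ X, S.IsTangentField X → ∀ w ∈ S.W, S.nabla X S.eN w = 0
  star_invariant : ∀ X Y Z, S.IsTangentField X → S.IsTangentField Y → S.IsTangentField Z →
    ∀ w ∈ S.W, F.g (S.star X Y w) (Z w) = F.g (X w) (S.star Y Z w)
  potential_symm : ∀ X' X Y Z, S.IsTangentField X' → S.IsTangentField X →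
      S.IsTangentField Y → S.IsTangentField Z → ∀ w ∈ S.W,
    S.ctensor X' X Y Z w = S.ctensor X X' Y Z w ∧
    S.ctensor X' X Y Z w = S.ctensor X' Y X Z w ∧
    S.ctensor X' X Y Z w = S.ctensor X' X Z Y w
  euler_metric : ∃ DN : ℂ, ∀ X Y, S.IsTangentField X → S.IsTangentField Y →
    ∀ w ∈ S.W, F.g (S.nabla X S.EN w) (Y w) + F.g (X w) (S.nabla Y S.EN w)
      = DN * F.g (X w) (Y w)
  euler_prod : ∀ X Y, S.IsTangentField X → S.IsTangentField Y → ∀ w ∈ S.W,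
    S.nabla X (S.star Y S.EN) w - S.star (S.nabla X Y) S.EN w
      + S.star X (S.nabla Y S.EN) w - S.nabla (S.star X Y) S.EN w = S.star X Y w

/-- `N` is a natural Frobenius submanifold: a Frobenius submanifold whose
tangent spaces are closed under the ambient product. -/
def IsNaturalFrobeniusSub (S : SubmanifoldDatum m n F) : Prop :=
  S.IsFrobeniusSub ∧ S.ClosedUnderMul

end SubmanifoldDatum

/-!
Because `e`, `E` and all products of tangent vectors are tangent, the projections in `e_N`,
`E_N` and `X * Y` do nothing: on `N` they are `e`, `E ∘ ι` and `X ∘ Y`. Each induced axiom then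
follows from the ambient one after pairing with a tangent vector `z`: differentiating produces
normal components, but these only enter through `pr`, and `⟨pr a ∘ b, z⟩ = ⟨a, b ∘ z⟩ = ⟨a ∘ b, z⟩`
for tangent `b`, `z`. So the induced 4-tensor is the ambient potentiality form
`∂_{X'}⟨X ∘ Y, Z⟩`, and the induced Euler identity is the ambient one once potentiality rewrites
`⟨∂_X(Y ∘ E), z⟩` as `⟨∂_E(X ∘ Y), z⟩`.
-/

section BilinearFamily

variable {𝕜 : Type*} [NontriviallyNormedField 𝕜]
  {D E F G : Type*} [NormedAddCommGroup D] [NormedSpace 𝕜 D] [NormedAddCommGroup E]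
  [NormedSpace 𝕜 E] [NormedAddCommGroup F] [NormedSpace 𝕜 F] [NormedAddCommGroup G]
  [NormedSpace 𝕜 G]

theorem differentiableAt_clm_of_forall_apply [CompleteSpace 𝕜] [FiniteDimensional 𝕜 E]
    {f : D → E →L[𝕜] F} {x : D} (h : ∀ y, DifferentiableAt 𝕜 (fun x => f x y) x) :
    DifferentiableAt 𝕜 f x := by
  let d := Module.finrank 𝕜 E
  have hd : d = Module.finrank 𝕜 (Fin d → 𝕜) := (Module.finrank_fin_fun 𝕜).symm
  let e₁ := ContinuousLinearEquiv.ofFinrankEq hd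
  let e₂ := (e₁.arrowCongr (1 : F ≃L[𝕜] F)).trans (ContinuousLinearEquiv.piRing (Fin d))
  rw [← Function.id_comp f, ← e₂.symm_comp_self]
  exact e₂.symm.differentiableAt.comp x (differentiableAt_pi.mpr fun i => h _)

theorem fderiv_clm_apply_apply {c : D → E →L[𝕜] F →L[𝕜] G} {u : D → E} {v : D → F} {x : D}
    (hc : DifferentiableAt 𝕜 c x) (hu : DifferentiableAt 𝕜 u x) (hv : DifferentiableAt 𝕜 v x)
    (d : D) :
    fderiv 𝕜 (fun y => c y (u y) (v y)) x d
      = fderiv 𝕜 (fun y => c y (u x) (v x)) x d + c x (fderiv 𝕜 u x d) (v x)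
        + c x (u x) (fderiv 𝕜 v x d) := by
  rw [fderiv_clm_apply (hc.clm_apply hu) hv, fderiv_clm_apply hc hu,
    fderiv_clm_apply (hc.clm_apply (differentiableAt_const _)) (differentiableAt_const _),
    fderiv_clm_apply hc (differentiableAt_const _)]
  simp only [fderiv_const_apply, add_apply, ContinuousLinearMap.comp_apply,
    ContinuousLinearMap.flip_apply, map_zero, zero_apply]
  abel

end BilinearFamily

namespace FrobeniusStructure

variable {m : ℕ} (F : FrobeniusStructure m)

def potentialForm (p w x y z : Fin m → ℂ) : ℂ :=
  fderiv ℂ (fun q => F.g (F.mul q x y) z) p w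

variable {F} {p : Fin m → ℂ}

theorem fderiv_g_apply {D : Type*} [NormedAddCommGroup D] [NormedSpace ℂ D]
    {H Z : D → (Fin m → ℂ)} {x : D} (hH : DifferentiableAt ℂ H x) (hZ : DifferentiableAt ℂ Z x)
    (d : D) :
    fderiv ℂ (fun y => F.g (H y) (Z y)) x d
      = F.g (fderiv ℂ H x d) (Z x) + F.g (H x) (fderiv ℂ Z x d) := by
  simpa only [LinearMap.toContinuousBilinearMap_apply, fderiv_const_apply, zero_apply,
    zero_add] using fderiv_clm_apply_apply (c := fun _ => F.g.toContinuousBilinearMap)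
      (differentiableAt_const _) hH hZ d

theorem differentiableAt_toContinuousBilinearMap_mul (hp : p ∈ F.U) :
    DifferentiableAt ℂ (fun q => (F.mul q).toContinuousBilinearMap) p :=
  differentiableAt_clm_of_forall_apply fun x => differentiableAt_clm_of_forall_apply fun y =>
    (F.mul_holo x y).differentiableAt (F.U_open.mem_nhds hp)

theorem potentialForm_eq (hp : p ∈ F.U) (w x y z : Fin m → ℂ) :
    F.potentialForm p w x y z = F.g (fderiv ℂ (fun q => F.mul q x y) p w) z := by
  simpa only [potentialForm, fderiv_const_apply, zero_apply, map_zero, add_zero] using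
    fderiv_g_apply ((F.mul_holo x y).differentiableAt (F.U_open.mem_nhds hp))
      (differentiableAt_const z) w

theorem potentialForm_swap₁₂ (hp : p ∈ F.U) (w x y z : Fin m → ℂ) :
    F.potentialForm p w x y z = F.potentialForm p x w y z :=
  F.potential p hp w x y z

theorem potentialForm_swap₂₃ (w x y z : Fin m → ℂ) :
    F.potentialForm p w x y z = F.potentialForm p w y x z := by
  simp only [potentialForm, F.mul_comm _ x y]

theorem potentialForm_swap₃₄ (w x y z : Fin m → ℂ) :
    F.potentialForm p w x y z = F.potentialForm p w x z y := by
  simp only [potentialForm, F.mul_comm _ x z, F.g_invariant, F.g_symm z]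

end FrobeniusStructure

namespace SubmanifoldDatum

open FrobeniusStructure

variable {m n : ℕ} {F : FrobeniusStructure m} (S : SubmanifoldDatum m n F) {w : Fin n → ℂ}

theorem fderiv_emb_lift {v : Fin m → ℂ} (hv : v ∈ S.T w) :
    fderiv ℂ S.emb w (S.lift w v) = v := by
  unfold T at hv
  rw [lift, dif_pos hv]
  exact hv.choose_spec

theorem differentiableAt_emb (hw : w ∈ S.W) : DifferentiableAt ℂ S.emb w :=
  S.emb_holo.differentiableAt (S.W_open.mem_nhds hw)

theorem g_pr_left (hw : w ∈ S.W) (v : Fin m → ℂ) {z : Fin m → ℂ} (hz : z ∈ S.T w) :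
    F.g (S.pr w v) z = F.g v z := by
  have h := S.pr_orth w hw v z hz
  rwa [map_sub, LinearMap.sub_apply, sub_eq_zero, eq_comm] at h

theorem g_pr_right (hw : w ∈ S.W) (v : Fin m → ℂ) {z : Fin m → ℂ} (hz : z ∈ S.T w) :
    F.g z (S.pr w v) = F.g z v := by
  rw [F.g_symm, S.g_pr_left hw v hz, F.g_symm]

theorem pr_eq_pr_of_forall_g_eq (hw : w ∈ S.W) {x y : Fin m → ℂ}
    (h : ∀ z ∈ S.T w, F.g x z = F.g y z) : S.pr w x = S.pr w y := by
  rw [← sub_eq_zero, ← map_sub]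
  refine S.g_nondeg_tangent w hw _ (S.pr_mem w hw _) fun z hz => ?_
  rw [S.g_pr_left hw _ hz, map_sub, LinearMap.sub_apply, h z hz, sub_self]

theorem covD_congr (hw : w ∈ S.W) {X Y Y' : (Fin n → ℂ) → (Fin m → ℂ)} (h : Set.EqOn Y Y' S.W) :
    S.covD X Y w = S.covD X Y' w := by
  simp only [covD, (h.eventuallyEq_of_mem (S.W_open.mem_nhds hw)).fderiv_eq]

theorem covD_comp_emb (hw : w ∈ S.W) {X : (Fin n → ℂ) → (Fin m → ℂ)} (hX : X w ∈ S.T w)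
    {G : (Fin m → ℂ) → (Fin m → ℂ)} (hG : DifferentiableAt ℂ G (S.emb w)) :
    S.covD X (fun v => G (S.emb v)) w = fderiv ℂ G (S.emb w) (X w) := by
  rw [covD, fderiv_fun_comp w hG (S.differentiableAt_emb hw), ContinuousLinearMap.comp_apply,
    S.fderiv_emb_lift hX]

theorem differentiableAt_toContinuousBilinearMap_mul_emb (hw : w ∈ S.W) :
    DifferentiableAt ℂ (fun v => (F.mul (S.emb v)).toContinuousBilinearMap) w :=
  DifferentiableAt.comp (g := fun q => (F.mul q).toContinuousBilinearMap) w
    (differentiableAt_toContinuousBilinearMap_mul (S.emb_maps w hw)) (S.differentiableAt_emb hw)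

theorem covD_mul (hw : w ∈ S.W) {X A B : (Fin n → ℂ) → (Fin m → ℂ)} (hX : X w ∈ S.T w)
    (hA : DifferentiableAt ℂ A w) (hB : DifferentiableAt ℂ B w) :
    S.covD X (fun v => F.mul (S.emb v) (A v) (B v)) w
      = fderiv ℂ (fun q => F.mul q (A w) (B w)) (S.emb w) (X w)
        + F.mul (S.emb w) (S.covD X A w) (B w) + F.mul (S.emb w) (A w) (S.covD X B w) := by
  have hp := S.emb_maps w hw
  have h := fderiv_clm_apply_apply (S.differentiableAt_toContinuousBilinearMap_mul_emb hw) hA hB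
    (S.lift w (X w))
  have hmul := S.covD_comp_emb hw hX (G := fun q => F.mul q (A w) (B w))
    ((F.mul_holo _ _).differentiableAt (F.U_open.mem_nhds hp))
  simp only [LinearMap.toContinuousBilinearMap_apply] at h
  simp only [covD] at hmul ⊢
  rw [h, hmul]

variable {S}

theorem IsTangentField.differentiableAt {X : (Fin n → ℂ) → (Fin m → ℂ)}
    (hX : S.IsTangentField X) (hw : w ∈ S.W) : DifferentiableAt ℂ X w :=
  hX.1.differentiableAt (S.W_open.mem_nhds hw)

theorem star_eq_mul (hclosed : S.ClosedUnderMul) (hw : w ∈ S.W)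
    {X Y : (Fin n → ℂ) → (Fin m → ℂ)} (hX : X w ∈ S.T w) (hY : Y w ∈ S.T w) :
    S.star X Y w = F.mul (S.emb w) (X w) (Y w) :=
  S.pr_fix w hw _ (hclosed w hw _ hX _ hY)

theorem g_mul_pr_left (hclosed : S.ClosedUnderMul) (hw : w ∈ S.W) (a : Fin m → ℂ)
    {b z : Fin m → ℂ} (hb : b ∈ S.T w) (hz : z ∈ S.T w) :
    F.g (F.mul (S.emb w) (S.pr w a) b) z = F.g (F.mul (S.emb w) a b) z := by
  rw [F.g_invariant, S.g_pr_left hw _ (hclosed w hw _ hb _ hz), ← F.g_invariant]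

theorem g_mul_pr_right (hclosed : S.ClosedUnderMul) (hw : w ∈ S.W) (a : Fin m → ℂ)
    {b z : Fin m → ℂ} (hb : b ∈ S.T w) (hz : z ∈ S.T w) :
    F.g (F.mul (S.emb w) b (S.pr w a)) z = F.g (F.mul (S.emb w) b a) z := by
  rw [F.mul_comm _ b, g_mul_pr_left hclosed hw a hb hz, F.mul_comm]

theorem covD_eN (he : ∀ w ∈ S.W, F.e ∈ S.T w) (hw : w ∈ S.W)
    {X : (Fin n → ℂ) → (Fin m → ℂ)} (hX : X w ∈ S.T w) : S.covD X S.eN w = 0 := by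
  rw [S.covD_congr hw (Y := S.eN) (Y' := fun v => (fun _ => F.e) (S.emb v))
      fun v hv => S.pr_fix v hv _ (he v hv),
    S.covD_comp_emb hw hX (differentiableAt_const _), fderiv_const_apply, zero_apply]

theorem EN_eq (hE : ∀ w ∈ S.W, F.E (S.emb w) ∈ S.T w) (hw : w ∈ S.W) :
    S.EN w = F.E (S.emb w) :=
  S.pr_fix w hw _ (hE w hw)

theorem covD_EN (hE : ∀ w ∈ S.W, F.E (S.emb w) ∈ S.T w) (hw : w ∈ S.W)
    {X : (Fin n → ℂ) → (Fin m → ℂ)} (hX : X w ∈ S.T w) :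
    S.covD X S.EN w = fderiv ℂ F.E (S.emb w) (X w) := by
  rw [S.covD_congr hw (Y := S.EN) (Y' := fun v => F.E (S.emb v)) fun v hv => EN_eq hE hv,
    S.covD_comp_emb hw hX (F.E_holo.differentiableAt (F.U_open.mem_nhds (S.emb_maps w hw)))]

variable {X Y Z : (Fin n → ℂ) → (Fin m → ℂ)}

theorem star_comm (X Y : (Fin n → ℂ) → (Fin m → ℂ)) (w : Fin n → ℂ) :
    S.star X Y w = S.star Y X w := by
  simp only [star, F.mul_comm _ (X w)]

theorem star_assoc (hclosed : S.ClosedUnderMul) (hw : w ∈ S.W) (hX : X w ∈ S.T w)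
    (hY : Y w ∈ S.T w) (hZ : Z w ∈ S.T w) :
    S.star (S.star X Y) Z w = S.star X (S.star Y Z) w := by
  rw [star_eq_mul hclosed hw (X := S.star X Y) (S.pr_mem w hw _) hZ,
    star_eq_mul hclosed hw (Y := S.star Y Z) hX (S.pr_mem w hw _), star_eq_mul hclosed hw hX hY,
    star_eq_mul hclosed hw hY hZ, F.mul_assoc]

theorem star_eN (he : ∀ w ∈ S.W, F.e ∈ S.T w) (hw : w ∈ S.W) (hX : X w ∈ S.T w) :
    S.star X S.eN w = X w := by
  rw [star, eN, S.pr_fix w hw _ (he w hw), F.mul_comm, F.e_unit, S.pr_fix w hw _ hX]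

theorem nabla_eN (he : ∀ w ∈ S.W, F.e ∈ S.T w) (hw : w ∈ S.W) (hX : X w ∈ S.T w) :
    S.nabla X S.eN w = 0 := by
  rw [nabla, covD_eN he hw hX, map_zero]

theorem g_star_invariant (hclosed : S.ClosedUnderMul) (hw : w ∈ S.W) (hX : X w ∈ S.T w)
    (hY : Y w ∈ S.T w) (hZ : Z w ∈ S.T w) :
    F.g (S.star X Y w) (Z w) = F.g (X w) (S.star Y Z w) := by
  rw [star_eq_mul hclosed hw hX hY, star_eq_mul hclosed hw hY hZ, F.g_invariant]

theorem ctensor_eq_potentialForm (hclosed : S.ClosedUnderMul)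
    {X' X Y Z : (Fin n → ℂ) → (Fin m → ℂ)} (hX' : S.IsTangentField X')
    (hX : S.IsTangentField X) (hY : S.IsTangentField Y) (hZ : S.IsTangentField Z)
    (hw : w ∈ S.W) :
    S.ctensor X' X Y Z w = F.potentialForm (S.emb w) (X' w) (X w) (Y w) (Z w) := by
  have hxT := hX.2 w hw
  have hyT := hY.2 w hw
  have hzT := hZ.2 w hw
  have hmulT := hclosed w hw _ hxT _ hyT
  have hpair : fderiv ℂ (fun v => F.g (S.star X Y v) (Z v)) w (S.lift w (X' w))
      = F.g (S.covD X' (fun v => F.mul (S.emb v) (X v) (Y v)) w) (Z w)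
        + F.g (F.mul (S.emb w) (X w) (Y w)) (S.covD X' Z w) := by
    have hstar : Set.EqOn (fun v => F.g (S.star X Y v) (Z v))
        (fun v => F.g (F.mul (S.emb v) (X v) (Y v)) (Z v)) S.W := fun v hv =>
      congrArg (F.g · (Z v)) (star_eq_mul hclosed hv (hX.2 v hv) (hY.2 v hv))
    rw [(hstar.eventuallyEq_of_mem (S.W_open.mem_nhds hw)).fderiv_eq]
    exact F.fderiv_g_apply ((S.differentiableAt_toContinuousBilinearMap_mul_emb hw).clm_apply
      (hX.differentiableAt hw) |>.clm_apply (hY.differentiableAt hw))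
      (hZ.differentiableAt hw) _
  rw [ctensor, hpair, S.covD_mul hw (hX'.2 w hw) (hX.differentiableAt hw)
      (hY.differentiableAt hw), star_eq_mul hclosed hw (S.pr_mem w hw _) hyT,
    star_eq_mul hclosed hw hxT (S.pr_mem w hw _), star_eq_mul hclosed hw hxT hyT]
  simp only [nabla, g_mul_pr_left hclosed hw _ hyT hzT, g_mul_pr_right hclosed hw _ hxT hzT,
    S.g_pr_right hw _ hmulT, map_add, LinearMap.add_apply,
    ← potentialForm_eq (S.emb_maps w hw)]
  ring

theorem ctensor_symm (hclosed : S.ClosedUnderMul)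
    {X' X Y Z : (Fin n → ℂ) → (Fin m → ℂ)} (hX' : S.IsTangentField X')
    (hX : S.IsTangentField X) (hY : S.IsTangentField Y) (hZ : S.IsTangentField Z)
    (hw : w ∈ S.W) :
    S.ctensor X' X Y Z w = S.ctensor X X' Y Z w ∧
      S.ctensor X' X Y Z w = S.ctensor X' Y X Z w ∧
      S.ctensor X' X Y Z w = S.ctensor X' X Z Y w := by
  simp only [ctensor_eq_potentialForm hclosed _ _ _ _ hw, hX', hX, hY, hZ]
  exact ⟨potentialForm_swap₁₂ (S.emb_maps w hw) .., potentialForm_swap₂₃ ..,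
    potentialForm_swap₃₄ ..⟩

theorem g_nabla_EN_add_g_nabla_EN (hE : ∀ w ∈ S.W, F.E (S.emb w) ∈ S.T w) (hw : w ∈ S.W)
    {X Y : (Fin n → ℂ) → (Fin m → ℂ)} (hX : X w ∈ S.T w) (hY : Y w ∈ S.T w) :
    F.g (S.nabla X S.EN w) (Y w) + F.g (X w) (S.nabla Y S.EN w)
      = F.Dconst * F.g (X w) (Y w) := by
  simp only [nabla, covD_EN hE hw hX, covD_EN hE hw hY, S.g_pr_left hw _ hY,
    S.g_pr_right hw _ hX]
  exact F.euler_metric _ (S.emb_maps w hw) _ _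

theorem euler_prod_induced (hclosed : S.ClosedUnderMul)
    (hE : ∀ w ∈ S.W, F.E (S.emb w) ∈ S.T w) {X Y : (Fin n → ℂ) → (Fin m → ℂ)}
    (hX : S.IsTangentField X) (hY : S.IsTangentField Y) (hw : w ∈ S.W) :
    S.nabla X (S.star Y S.EN) w - S.star (S.nabla X Y) S.EN w
      + S.star X (S.nabla Y S.EN) w - S.nabla (S.star X Y) S.EN w = S.star X Y w := by
  have hp := S.emb_maps w hw
  have hxT := hX.2 w hw
  have hyT := hY.2 w hw
  set p := S.emb w
  set x := X w
  set y := Y w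
  set Ep := F.E p
  set DE := fderiv ℂ F.E p
  have hEd : DifferentiableAt ℂ F.E p := F.E_holo.differentiableAt (F.U_open.mem_nhds hp)
  have h1 : S.nabla X (S.star Y S.EN) w
      = S.pr w (fderiv ℂ (fun q => F.mul q y Ep) p x + F.mul p (S.covD X Y w) Ep
          + F.mul p y (DE x)) := by
    have hstar : Set.EqOn (S.star Y S.EN)
        (fun v => F.mul (S.emb v) (Y v) (F.E (S.emb v))) S.W := fun v hv => by
      rw [star_eq_mul hclosed hv (hY.2 v hv) (S.pr_mem v hv _), EN_eq hE hv]
    rw [nabla, S.covD_congr hw hstar, S.covD_mul hw hxT (B := fun v => F.E (S.emb v))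
      (hY.differentiableAt hw) (hEd.comp w (S.differentiableAt_emb hw)),
      S.covD_comp_emb hw hxT hEd]
  have h2 : S.star (S.nabla X Y) S.EN w = S.pr w (F.mul p (S.pr w (S.covD X Y w)) Ep) := by
    rw [star, EN_eq hE hw]
    rfl
  have h3 : S.star X (S.nabla Y S.EN) w = S.pr w (F.mul p x (S.pr w (DE y))) := by
    rw [star, nabla, covD_EN hE hw hyT]
  have h4 : S.nabla (S.star X Y) S.EN w = S.pr w (DE (F.mul p x y)) := by
    rw [nabla, covD_EN hE hw (S.pr_mem w hw _), star_eq_mul hclosed hw hxT hyT]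
  rw [h1, h2, h3, h4, star, ← map_sub, ← map_add, ← map_sub]
  refine S.pr_eq_pr_of_forall_g_eq hw fun z hz => ?_
  have hpot : F.potentialForm p x y Ep z = F.potentialForm p Ep x y z :=
    (potentialForm_swap₁₂ hp ..).trans <| (potentialForm_swap₂₃ ..).trans <|
      (potentialForm_swap₁₂ hp ..).trans (potentialForm_swap₂₃ ..)
  have heuler := congrArg (F.g · z) (F.euler_prod p hp x y)
  simp only [map_add, map_sub, LinearMap.add_apply, LinearMap.sub_apply] at heuler ⊢
  rw [g_mul_pr_left hclosed hw _ (hE w hw) hz, g_mul_pr_right hclosed hw _ hxT hz,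
    ← potentialForm_eq hp, hpot, F.mul_comm p y]
  rw [← potentialForm_eq hp] at heuler
  linear_combination heuler

end SubmanifoldDatum

/-- Theorem 0.5 (Strachan's sufficient condition): if the induced metric is
flat, the unit field and the Euler field are everywhere tangent to `N`, and
the tangent spaces are closed under the ambient product, then `N` is a natural
Frobenius submanifold. -/
theorem strachan {m n : ℕ} (F : FrobeniusStructure m) (S : SubmanifoldDatum m n F)
    (hflat : S.FlatInduced)
    (he : ∀ w ∈ S.W, F.e ∈ S.T w)
    (hE : ∀ w ∈ S.W, F.E (S.emb w) ∈ S.T w)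
    (hclosed : S.ClosedUnderMul) :
    S.IsNaturalFrobeniusSub := by
  open SubmanifoldDatum in
  exact ⟨{
    nabla_flat := hflat
    star_comm := fun X Y _ _ w _ => star_comm X Y w
    star_assoc := fun _ _ _ hX hY hZ w hw =>
      star_assoc hclosed hw (hX.2 w hw) (hY.2 w hw) (hZ.2 w hw)
    star_unit := fun _ hX w hw => star_eN he hw (hX.2 w hw)
    eN_flat := fun _ hX w hw => nabla_eN he hw (hX.2 w hw)
    star_invariant := fun _ _ _ hX hY hZ w hw =>
      g_star_invariant hclosed hw (hX.2 w hw) (hY.2 w hw) (hZ.2 w hw)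
    potential_symm := fun _ _ _ _ hX' hX hY hZ _ hw => ctensor_symm hclosed hX' hX hY hZ hw
    euler_metric := ⟨F.Dconst, fun _ _ hX hY w hw =>
      g_nabla_EN_add_g_nabla_EN hE hw (hX.2 w hw) (hY.2 w hw)⟩
    euler_prod := fun _ _ hX hY _ hw => euler_prod_induced hclosed hE hX hY hw }, hclosed⟩
end
end

section
/- (The B₃ Frobenius manifold.) For every t ∈ ℂ³ the product ∘_t defined from the B₃ prepotential F is commutative and associative (the WDVV equations hold), has ∂₁ as unit, and satisfies the invariance η(x ∘_t y, z) = η(x, y ∘_t z); moreover, with the Euler field E(t) = (t₁, (2/3)t₂, (1/3)t₃) and D = 4/3, the data (η, ∘_t, ∂₁, E) form a Frobenius structure in flat coordinates on ℂ³ (i.e. they also satisfy potentiality and the two Euler-field conditions with D = 4/3). -/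
open scoped BigOperators Matrix

noncomputable section

/-- The prepotential of the Frobenius manifold constructed from `B₃`:
`F = (1/2)t₁²t₃ + (1/2)t₁t₂² + (1/6)t₂³t₃ + (1/6)t₂²t₃³ + (1/210)t₃⁷`. -/
def Fpot (t : Fin 3 → ℂ) : ℂ :=
  (1 / 2) * (t 0) ^ 2 * t 2 + (1 / 2) * t 0 * (t 1) ^ 2
    + (1 / 6) * (t 1) ^ 3 * t 2 + (1 / 6) * (t 1) ^ 2 * (t 2) ^ 3
    + (1 / 210) * (t 2) ^ 7

/-- The flat metric `η` of `B₃`: `η₁₃ = η₃₁ = η₂₂ = 1`, all other entries `0`. -/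
def etaMat : Matrix (Fin 3) (Fin 3) ℂ :=
  !![0, 0, 1; 0, 1, 0; 1, 0, 0]

/-- The bilinear form associated with `η`. -/
def etaB (x y : Fin 3 → ℂ) : ℂ := ∑ i, ∑ j, etaMat i j * x i * y j

/-- The third partial derivative `∂_i ∂_j ∂_l F` at `t`. -/
def d3F (t : Fin 3 → ℂ) (i j l : Fin 3) : ℂ :=
  iteratedFDeriv ℂ 3 Fpot t ![Pi.single i 1, Pi.single j 1, Pi.single l 1]

/-- The product `∘_t` of the `B₃` Frobenius manifold:
`∂_i ∘_t ∂_j = Σ_k (Σ_l η^{kl} ∂_i∂_j∂_l F(t)) ∂_k`, extended bilinearly. -/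
def mulB (t : Fin 3 → ℂ) (x y : Fin 3 → ℂ) : Fin 3 → ℂ :=
  fun k => ∑ i, ∑ j, ∑ l, x i * y j * (etaMat⁻¹ k l) * d3F t i j l

/-- The Euler field of `B₃`: `E(t) = (t₁, (2/3)t₂, (1/3)t₃)`. -/
def EulerB (t : Fin 3 → ℂ) : Fin 3 → ℂ :=
  ![t 0, (2 / 3) * t 1, (1 / 3) * t 2]

/-!
The third derivative of the polynomial `F` is an explicit cubic form `c(t)`, and since `η` is
its own inverse, `η(x ∘_t y, z) = c(t)(x, y, z)`. Commutativity and invariance are then the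
symmetry of `c(t)`, the unit axiom is `c(t)(∂₁, x, y) = η(x, y)`, and potentiality is the symmetry
of the fourth derivative of `F`. Associativity (WDVV) and the Euler conditions, which express
that `F` is quasihomogeneous of degree `7/3` for `E`, are polynomial identities in `t, x, y, z`.
-/

section IteratedFDeriv

variable {𝕜 E F : Type*} [NontriviallyNormedField 𝕜] [NormedAddCommGroup E] [NormedSpace 𝕜 E]
  [NormedAddCommGroup F] [NormedSpace 𝕜 F]

theorem iteratedFDeriv_three_apply {f : E → F} (hf : ContDiff 𝕜 3 f) (x u v w : E) :
    iteratedFDeriv 𝕜 3 f x ![u, v, w]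
      = fderiv 𝕜 (fun y => fderiv 𝕜 (fun z => fderiv 𝕜 f z w) y v) x u := by
  have hf' : ContDiff 𝕜 2 (fderiv 𝕜 f) := hf.fderiv_right (by norm_num)
  have hf'' : DifferentiableAt 𝕜 (fderiv 𝕜 (fderiv 𝕜 f)) x :=
    (hf'.fderiv_right (m := 1) (by norm_num)).differentiable (by norm_num) x
  have hdir : (fun y => fderiv 𝕜 (fun z => fderiv 𝕜 f z w) y v)
      = fun y => fderiv 𝕜 (fderiv 𝕜 f) y v w := by
    funext y
    rw [fderiv_clm_apply (hf'.differentiable (by norm_num) y) (differentiableAt_const w)]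
    simp
  rw [hdir, fderiv_clm_apply (hf''.clm_apply (differentiableAt_const v)) (differentiableAt_const w),
    fderiv_clm_apply hf'' (differentiableAt_const v)]
  simp [iteratedFDeriv_succ_apply_right, Fin.init]

end IteratedFDeriv

lemma contDiff_Fpot : ContDiff ℂ 3 Fpot := by
  unfold Fpot; fun_prop

def cubicForm (t u v w : Fin 3 → ℂ) : ℂ :=
  u 0 * (v 0 * w 2 + v 1 * w 1 + v 2 * w 0)
  + u 1 * (v 0 * w 1 + v 1 * (w 0 + t 2 * w 1 + (t 1 + t 2 ^ 2) * w 2)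
      + v 2 * ((t 1 + t 2 ^ 2) * w 1 + 2 * t 1 * t 2 * w 2))
  + u 2 * (v 0 * w 0 + v 1 * ((t 1 + t 2 ^ 2) * w 1 + 2 * t 1 * t 2 * w 2)
      + v 2 * (2 * t 1 * t 2 * w 1 + (t 1 ^ 2 + t 2 ^ 4) * w 2))

lemma fderiv_fderiv_fderiv_Fpot (t u v w : Fin 3 → ℂ) :
    fderiv ℂ (fun y => fderiv ℂ (fun z => fderiv ℂ Fpot z w) y v) t u = cubicForm t u v w := by
  unfold Fpot cubicForm
  simp (disch := fun_prop) [fderiv_fun_add, fderiv_fun_mul, fderiv_fun_pow, fderiv_apply]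
  ring

lemma d3F_eq_cubicForm (t : Fin 3 → ℂ) (i j l : Fin 3) :
    d3F t i j l = cubicForm t (Pi.single i 1) (Pi.single j 1) (Pi.single l 1) := by
  rw [d3F, iteratedFDeriv_three_apply contDiff_Fpot, fderiv_fderiv_fderiv_Fpot]

lemma cubicForm_comm (t u v w : Fin 3 → ℂ) : cubicForm t u v w = cubicForm t v u w := by
  unfold cubicForm; ring

lemma cubicForm_rotate (t u v w : Fin 3 → ℂ) : cubicForm t u v w = cubicForm t v w u := by
  unfold cubicForm; ring

lemma differentiable_cubicForm (u v w : Fin 3 → ℂ) :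
    Differentiable ℂ fun t => cubicForm t u v w := by
  unfold cubicForm; fun_prop

lemma etaMat_inv : etaMat⁻¹ = etaMat :=
  Matrix.inv_eq_left_inv <| by
    ext i j; fin_cases i <;> fin_cases j <;> simp [etaMat, Matrix.mul_apply, Fin.sum_univ_three]

lemma etaB_eq (x y : Fin 3 → ℂ) : etaB x y = x 0 * y 2 + x 1 * y 1 + x 2 * y 0 := by
  simp [etaB, etaMat, Fin.sum_univ_three]

lemma etaB_comm (x y : Fin 3 → ℂ) : etaB x y = etaB y x := by
  rw [etaB_eq, etaB_eq]; ring

lemma mulB_apply (t x y : Fin 3 → ℂ) (k : Fin 3) :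
    mulB t x y k = cubicForm t x y (Pi.single k.rev 1) := by
  simp only [mulB, etaMat_inv, d3F_eq_cubicForm, Fin.sum_univ_three]
  fin_cases k <;> simp [etaMat, cubicForm] <;> ring

lemma etaB_mulB (t x y z : Fin 3 → ℂ) : etaB (mulB t x y) z = cubicForm t x y z := by
  simp only [etaB_eq, mulB_apply]
  simp [cubicForm]; ring

theorem mulB_comm (t x y : Fin 3 → ℂ) : mulB t x y = mulB t y x := by
  ext k; rw [mulB_apply, mulB_apply, cubicForm_comm]

theorem mulB_assoc (t x y z : Fin 3 → ℂ) : mulB t (mulB t x y) z = mulB t x (mulB t y z) := by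
  ext k; fin_cases k <;> simp [mulB_apply, cubicForm] <;> ring

theorem mulB_single_zero_left (t x : Fin 3 → ℂ) : mulB t (Pi.single 0 1) x = x := by
  ext k; rw [mulB_apply]; fin_cases k <;> simp [cubicForm]

theorem etaB_mulB_assoc (t x y z : Fin 3 → ℂ) : etaB (mulB t x y) z = etaB x (mulB t y z) := by
  rw [etaB_comm x, etaB_mulB, etaB_mulB, cubicForm_rotate]

theorem differentiable_mulB (x y : Fin 3 → ℂ) : Differentiable ℂ fun t => mulB t x y := by
  simp only [funext (mulB_apply _ x y)]
  exact differentiable_pi.2 fun k => differentiable_cubicForm x y _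

lemma fderiv_mulB_apply (t v x y : Fin 3 → ℂ) (k : Fin 3) :
    fderiv ℂ (fun s => mulB s x y) t v k
      = fderiv ℂ (fun s => cubicForm s x y (Pi.single k.rev 1)) t v := by
  simp only [← mulB_apply, fderiv_apply (differentiable_mulB x y t)]
  rfl

theorem fderiv_etaB_mulB_comm (t w x y z : Fin 3 → ℂ) :
    fderiv ℂ (fun s => etaB (mulB s x y) z) t w
      = fderiv ℂ (fun s => etaB (mulB s w y) z) t x := by
  simp only [etaB_mulB]
  unfold cubicForm
  simp (disch := fun_prop) [fderiv_fun_add, fderiv_fun_mul, fderiv_fun_pow, fderiv_apply]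
  ring

lemma EulerB_eq_diagonal :
    EulerB = ⇑(Matrix.toLin' (Matrix.diagonal ![(1 : ℂ), 2 / 3, 1 / 3])).toContinuousLinearMap := by
  ext t k; fin_cases k <;> simp [EulerB, Matrix.mulVec_diagonal]

theorem differentiable_EulerB : Differentiable ℂ EulerB := by
  rw [EulerB_eq_diagonal]; exact ContinuousLinearMap.differentiable _

lemma fderiv_EulerB (t : Fin 3 → ℂ) : fderiv ℂ EulerB t = EulerB := by
  rw [EulerB_eq_diagonal, ContinuousLinearMap.fderiv]

theorem etaB_fderiv_EulerB_add (t x y : Fin 3 → ℂ) :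
    etaB (fderiv ℂ EulerB t x) y + etaB x (fderiv ℂ EulerB t y) = (4 / 3 : ℂ) * etaB x y := by
  simp only [fderiv_EulerB, etaB_eq, EulerB]
  simp; ring

theorem fderiv_mulB_EulerB (t x y : Fin 3 → ℂ) :
    fderiv ℂ (fun s => mulB s x y) t (EulerB t) - fderiv ℂ EulerB t (mulB t x y)
        + mulB t (fderiv ℂ EulerB t x) y + mulB t x (fderiv ℂ EulerB t y) = mulB t x y := by
  ext k
  simp only [Pi.add_apply, Pi.sub_apply, fderiv_mulB_apply, fderiv_EulerB]
  fin_cases k <;>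
    simp (disch := fun_prop) [mulB_apply, cubicForm, EulerB, Pi.single_apply, fderiv_fun_add,
      fderiv_fun_mul, fderiv_fun_pow, fderiv_apply] <;>
    ring

/-- The `B₃` Frobenius manifold: the product `∘_t` is commutative and
associative (the WDVV equations hold), has `∂₁` as unit, satisfies the
invariance `η(x ∘_t y, z) = η(x, y ∘_t z)`; and, together with the Euler field
`E(t) = (t₁, (2/3)t₂, (1/3)t₃)` and `D = 4/3`, the data form a Frobenius
structure in flat coordinates on `ℂ³` (holomorphy, potentiality and the two
Euler-field conditions). -/
theorem b3_frobenius :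
    (∀ t x y, mulB t x y = mulB t y x) ∧
    (∀ t x y z, mulB t (mulB t x y) z = mulB t x (mulB t y z)) ∧
    (∀ t x, mulB t (Pi.single 0 1) x = x) ∧
    (∀ t x y z, etaB (mulB t x y) z = etaB x (mulB t y z)) ∧
    (∀ x y, Differentiable ℂ fun t => mulB t x y) ∧
    (∀ t w x y z : Fin 3 → ℂ,
      fderiv ℂ (fun s => etaB (mulB s x y) z) t w
        = fderiv ℂ (fun s => etaB (mulB s w y) z) t x) ∧
    Differentiable ℂ EulerB ∧
    (∀ t x y, etaB (fderiv ℂ EulerB t x) y + etaB x (fderiv ℂ EulerB t y)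
        = (4 / 3 : ℂ) * etaB x y) ∧
    (∀ t x y, fderiv ℂ (fun s => mulB s x y) t (EulerB t)
        - fderiv ℂ EulerB t (mulB t x y)
        + mulB t (fderiv ℂ EulerB t x) y + mulB t x (fderiv ℂ EulerB t y)
      = mulB t x y) :=
  ⟨mulB_comm, mulB_assoc, mulB_single_zero_left, etaB_mulB_assoc, differentiable_mulB,
    fderiv_etaB_mulB_comm, differentiable_EulerB, etaB_fderiv_EulerB_add, fderiv_mulB_EulerB⟩
end
end
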